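/- arXiv:1512.00380 — 2 statements merged into one kernel-verified Lean document; each statement's English description precedes it below -/
import Mathlib

section
/- Moreover, the function of the previous lemma can be chosen so that for every ε > 0, only finitely many points of its graph are at distance greater than ε from T. -/
/-!
Enumerate a dense subset of `T` so that every point is repeated infinitely often, and move the
`m`-th point horizontally by less than `1 / (m + 1)` to a new abscissa in `[0, 1]`, distinct from
all the others. These points form the graph of a function on a countable set, and their distance
to `T` tends to zero: this gives the finiteness condition and forces every accumulation point of
the graph into `T`. Conversely every point of `T` is a cluster point of the sequence, whose terms
are pairwise distinct, hence an accumulation point of the graph.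
-/

open Set Filter Topology Metric

noncomputable section

/-- The graph of `f` restricted to the set `A`, as a subset of `ℝ × ℝ`. -/
def graphOn (A : Set ℝ) (f : ℝ → ℝ) : Set (ℝ × ℝ) :=
  {p : ℝ × ℝ | p.1 ∈ A ∧ p.2 = f p.1}

/-- The set of accumulation points of a set `G ⊆ ℝ × ℝ`. -/
def accPts (G : Set (ℝ × ℝ)) : Set (ℝ × ℝ) :=
  {p : ℝ × ℝ | AccPt p (𝓟 G)}

/-- Baire class 1 on `[0,1]`: pointwise limit of continuous functions. -/
def Baire1 (f : ℝ → ℝ) : Prop :=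
  ∃ g : ℕ → ℝ → ℝ, (∀ n, ContinuousOn (g n) (Icc 0 1)) ∧
    ∀ x ∈ Icc (0:ℝ) 1, Tendsto (fun n => g n x) atTop (𝓝 (f x))

/-- Baire class 2 on `[0,1]`: pointwise limit of Baire class 1 functions. -/
def Baire2 (f : ℝ → ℝ) : Prop :=
  ∃ g : ℕ → ℝ → ℝ, (∀ n, Baire1 (g n)) ∧
    ∀ x ∈ Icc (0:ℝ) 1, Tendsto (fun n => g n x) atTop (𝓝 (f x))

/-- A set is meager relative to the subspace `[0,1]`. -/
def MeagreIn01 (D : Set ℝ) : Prop :=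
  IsMeagre ((↑) ⁻¹' D : Set (Icc (0:ℝ) 1))

/-- Embedding of the plane into `ℝ × ℝ̄` (extended reals in the second coordinate). -/
def embedE (p : ℝ × ℝ) : ℝ × EReal := (p.1, (p.2 : EReal))

open Function TopologicalSpace

theorem exists_injective_forall_mem_of_infinite {α : Type*} {U : ℕ → Set α}
    (hU : ∀ n, (U n).Infinite) : ∃ x : ℕ → α, Injective x ∧ ∀ n, x n ∈ U n := by
  classical
  choose t htU hcard using fun n => (hU n).exists_subset_card_eq (n + 1)
  -- Hall's condition holds because the `n`-th set alone has `n + 1` elements.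
  obtain ⟨x, hinj, hx⟩ := (Finset.all_card_le_biUnion_card_iff_exists_injective t).1 fun s => by
    rcases s.eq_empty_or_nonempty with rfl | hs
    · simp
    calc s.card ≤ (Finset.range (s.max' hs + 1)).card :=
          Finset.card_le_card fun i hi => Finset.mem_range.2 (Nat.lt_succ_of_le (s.le_max' i hi))
      _ = (t (s.max' hs)).card := by rw [Finset.card_range, hcard]
      _ ≤ (s.biUnion t).card :=
          Finset.card_le_card (Finset.subset_biUnion_of_mem t (s.max'_mem hs))
  exact ⟨x, hinj, fun n => htU n (hx n)⟩

theorem infinite_Icc_inter_ball {a b c r : ℝ} (hab : a < b) (hc : c ∈ Icc a b) (hr : 0 < r) :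
    (Icc a b ∩ ball c r).Infinite := by
  have hlt : max a (c - r) < min b (c + r) := by
    rw [max_lt_iff, lt_min_iff, lt_min_iff]
    refine ⟨⟨hab, ?_⟩, ?_, ?_⟩ <;> linarith [hc.1, hc.2]
  refine (Ioo_infinite hlt).mono ?_
  rw [Real.ball_eq_Ioo, ← Ioo_inter_Ioo]
  exact inter_subset_inter_left _ Ioo_subset_Icc_self

theorem exists_seq_mem_forall_mapClusterPt {X : Type*} [TopologicalSpace X] {T : Set X}
    [SeparableSpace T] (hne : T.Nonempty) :
    ∃ w : ℕ → X, (∀ m, w m ∈ T) ∧ ∀ t ∈ T, MapClusterPt t atTop w := by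
  have := hne.to_subtype
  set u := denseSeq T
  -- Every term of the dense sequence `u` is repeated infinitely often.
  set v : ℕ → T := fun m => u m.unpair.1
  have hu : range u ⊆ {s | MapClusterPt s atTop v} := by
    rintro _ ⟨n, rfl⟩
    refine MapClusterPt.of_comp (φ := Nat.pair n) (p := atTop) ?_ ?_
    · exact tendsto_atTop_mono (Nat.right_le_pair n) tendsto_id
    · simpa [v, comp_def] using (tendsto_const_nhds (x := u n) (f := atTop)).mapClusterPt
  have hv : closure (range u) ⊆ {s | MapClusterPt s atTop v} :=
    isClosed_setOfPred_clusterPt.closure_subset_iff.2 hu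
  rw [(denseRange_denseSeq T).closure_range] at hv
  exact ⟨Subtype.val ∘ v, fun m => (v m).2, fun t ht =>
    (hv (mem_univ ⟨t, ht⟩)).continuousAt_comp continuous_subtype_val.continuousAt⟩

theorem Function.Injective.accPt_range_of_mapClusterPt {X : Type*} [TopologicalSpace X]
    {q : ℕ → X} (hq : Injective q) {t : X} (ht : MapClusterPt t atTop q) :
    AccPt t (𝓟 (range q)) := by
  have hne : ∀ᶠ m in atTop, q m ≠ t := by
    rw [← Nat.cofinite_eq_atTop, eventually_cofinite]
    simp only [not_not]
    exact (finite_singleton t).preimage hq.injOn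
  rw [accPt_iff_nhds]
  intro U hU
  obtain ⟨m, hmU, hmt⟩ := ((mapClusterPt_iff_frequently.1 ht U hU).and_eventually hne).exists
  exact ⟨q m, ⟨hmU, m, rfl⟩, hmt⟩

theorem graphOn_range_comp_invFun {x b : ℕ → ℝ} (hx : Injective x) :
    graphOn (range x) (b ∘ invFun x) = range fun m => (x m, b m) := by
  ext ⟨p₁, p₂⟩
  simp only [_root_.graphOn, mem_ofPred_eq, mem_range, Prod.mk.injEq, comp_apply]
  constructor
  · rintro ⟨⟨m, rfl⟩, rfl⟩
    exact ⟨m, rfl, by rw [leftInverse_invFun hx m]⟩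
  · rintro ⟨m, rfl, rfl⟩
    exact ⟨⟨m, rfl⟩, by rw [leftInverse_invFun hx m]⟩

section Metric

variable {X : Type*} [MetricSpace X]

theorem MapClusterPt.of_tendsto_dist {ι : Type*} {l : Filter ι} {q w : ι → X} {t : X}
    (hw : MapClusterPt t l w) (hqw : Tendsto (fun m => dist (q m) (w m)) l (𝓝 0)) :
    MapClusterPt t l q := by
  rw [nhds_basis_ball.mapClusterPt_iff_frequently] at hw ⊢
  intro ε hε
  have hq := hqw.eventually (gt_mem_nhds (half_pos hε))
  refine ((hw _ (half_pos hε)).and_eventually hq).mono ?_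
  rintro m ⟨hwm, hqm⟩
  rw [mem_ball] at hwm ⊢
  linarith [dist_triangle (q m) (w m) t]

theorem mem_of_accPt_of_finite_setOf_lt_infDist {S T : Set X} {p : X} (hT : IsClosed T)
    (hne : T.Nonempty) (hfar : ∀ ε > 0, {q | q ∈ S ∧ ε < infDist q T}.Finite)
    (hp : AccPt p (𝓟 S)) : p ∈ T := by
  by_contra hpT
  have hd := half_pos ((hT.notMem_iff_infDist_pos hne).1 hpT)
  have hnear : (ball p (infDist p T / 2) ∩ S).Infinite :=
    Set.Infinite.of_accPt (hp.nhds_inter (ball_mem_nhds p hd))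
  refine (hfar _ hd).not_infinite (hnear.mono ?_)
  rintro q ⟨hq, hqS⟩
  rw [mem_ball'] at hq
  exact ⟨hqS, by linarith [infDist_le_infDist_add_dist (s := T) (x := p) (y := q)]⟩

theorem finite_setOf_mem_range_lt_infDist {q : ℕ → X} {T : Set X}
    (hq : Tendsto (fun m => infDist (q m) T) atTop (𝓝 0)) {ε : ℝ} (hε : 0 < ε) :
    {p | p ∈ range q ∧ ε < infDist p T}.Finite := by
  have hnear := hq.eventually (gt_mem_nhds hε)
  rw [← Nat.cofinite_eq_atTop, eventually_cofinite] at hnear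
  refine (hnear.image q).subset ?_
  rintro _ ⟨⟨m, rfl⟩, hm⟩
  exact ⟨m, not_lt.2 hm.le, rfl⟩

end Metric

theorem stmt1 (T : Set (ℝ × ℝ)) (hTc : IsClosed T)
    (hT : ∀ p ∈ T, p.1 ∈ Icc (0:ℝ) 1) :
    ∃ A : Set ℝ, A ⊆ Icc 0 1 ∧ A.Countable ∧
      ∃ f : ℝ → ℝ, accPts (graphOn A f) = T ∧
        ∀ ε > (0:ℝ), {p : ℝ × ℝ | p ∈ graphOn A f ∧ ε < infDist p T}.Finite := by
  rcases T.eq_empty_or_nonempty with rfl | hne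
  · refine ⟨∅, empty_subset _, countable_empty, 0, ?_, fun ε _ => by simp [_root_.graphOn]⟩
    ext p
    simp [_root_.graphOn, accPts, AccPt]
  obtain ⟨w, hwT, hw⟩ := exists_seq_mem_forall_mapClusterPt hne
  obtain ⟨x, hx, hxw⟩ := exists_injective_forall_mem_of_infinite fun m =>
    infinite_Icc_inter_ball zero_lt_one (hT _ (hwT m)) (Nat.one_div_pos_of_nat (n := m))
  set q : ℕ → ℝ × ℝ := fun m => (x m, (w m).2)
  have hqw : Tendsto (fun m => dist (q m) (w m)) atTop (𝓝 0) := by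
    refine squeeze_zero (fun _ => dist_nonneg) (fun m => ?_)
      tendsto_one_div_add_atTop_nhds_zero_nat
    simpa [q, Prod.dist_eq] using (mem_ball.1 (hxw m).2).le
  have hfar : ∀ ε > (0:ℝ), {p | p ∈ range q ∧ ε < infDist p T}.Finite :=
    fun ε => finite_setOf_mem_range_lt_infDist
      (squeeze_zero (fun _ => infDist_nonneg) (fun m => infDist_le_dist_of_mem (hwT m)) hqw)
  have hinj : Injective q := fun m n h => hx (congrArg Prod.fst h)
  refine ⟨range x, range_subset_iff.2 fun m => (hxw m).1, countable_range x,
    (fun m => (w m).2) ∘ invFun x, ?_, ?_⟩ <;> rw [graphOn_range_comp_invFun hx]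
  · refine (Subset.antisymm fun p hp => mem_of_accPt_of_finite_setOf_lt_infDist hTc hne hfar hp)
      fun t ht => hinj.accPt_range_of_mapClusterPt ((hw t ht).of_tendsto_dist hqw)
  · exact hfar
end
end

section
/- There exists a bounded Baire class 2 function f : [0,1] → ℝ whose set of accumulation points of its graph equals T if and only if T is compact and T ∩ ({x} × ℝ) is nonempty for every x ∈ [0,1]. -/
/-!
A bounded function has its graph in a compact box, so `L_f` is compact, and every `x ∈ [0,1]`,
being a limit of other points of `[0,1]`, carries a point of `L_f`.

Conversely, the lower envelope `g x = min {y | (x, y) ∈ T}` is lower semicontinuous, hence Baire 1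
as the increasing limit of its `k`-Lipschitz minorants. Take a sequence `(aₙ, bₙ)` in `T` having
every point of `T` as a cluster point, and distinct `Xₙ ∈ [0,1]` with `|Xₙ - aₙ| → 0`. The
function equal to `bₙ` at `Xₙ` and to `g` elsewhere differs from `g` at countably many points,
so it is Baire 2; its graph lies in `T ∪ {(Xₙ, bₙ)}` and contains the points `(Xₙ, bₙ)`, whose
accumulation points are exactly `T`.
-/

open Set Filter Topology Metric

noncomputable section

open Function

theorem accPts_eq_derivedSet (G : Set (ℝ × ℝ)) : accPts G = derivedSet G := rfl

theorem Function.Injective.accPt_range_iff {X ι : Type*} [TopologicalSpace X] [T1Space X]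
    {w : ι → X} (hw : Injective w) {p : X} :
    AccPt p (𝓟 (range w)) ↔ MapClusterPt p cofinite w := by
  simp_rw [mapClusterPt_iff_frequently, frequently_cofinite_iff_infinite]
  constructor
  · intro hp s hs
    refine ((Infinite.of_accPt (hp.nhds_inter hs)).mono ?_).of_image w
    rintro _ ⟨hns, n, rfl⟩
    exact ⟨n, hns, rfl⟩
  · intro hp
    refine accPt_iff_nhds.2 fun s hs => ?_
    obtain ⟨n, hns, hnp⟩ := ((hp s hs).sdiff ((finite_singleton p).preimage hw.injOn)).nonempty
    exact ⟨w n, ⟨hns, n, rfl⟩, hnp⟩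

theorem MapClusterPt.of_tendsto_dist_s7 {X ι : Type*} [PseudoMetricSpace X] {l : Filter ι}
    {v w : ι → X} {p : X} (hv : MapClusterPt p l v)
    (hvw : Tendsto (fun i => dist (w i) (v i)) l (𝓝 0)) : MapClusterPt p l w := by
  rw [nhds_basis_ball.mapClusterPt_iff_frequently] at hv ⊢
  intro ε hε
  refine ((hv _ (half_pos hε)).and_eventually
    ((tendsto_order.1 hvw).2 _ (half_pos hε))).mono fun i ⟨hvi, hwi⟩ => ?_
  rw [mem_ball] at hvi ⊢
  calc dist (w i) p ≤ dist (w i) (v i) + dist (v i) p := dist_triangle _ _ _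
    _ < ε / 2 + ε / 2 := add_lt_add hwi hvi
    _ = ε := add_halves ε

theorem exists_seq_mapClusterPt_iff {X : Type*} [TopologicalSpace X] {T : Set X}
    [TopologicalSpace.SeparableSpace T] (hT : IsClosed T) (hne : T.Nonempty) :
    ∃ v : ℕ → X, (∀ n, v n ∈ T) ∧ ∀ p, MapClusterPt p cofinite v ↔ p ∈ T := by
  have := hne.to_subtype
  obtain ⟨u, hu⟩ := TopologicalSpace.exists_dense_seq T
  refine ⟨fun n => u n.unpair.1, fun n => (u _).2, fun p => ⟨fun hp => ?_, fun hp => ?_⟩⟩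
  · have hvT : Tendsto (fun n : ℕ => (u n.unpair.1 : X)) cofinite (𝓟 T) :=
      tendsto_principal.2 (Eventually.of_forall fun n => (u _).2)
    exact isClosed_iff_clusterPt.1 hT p (ClusterPt.mono hp hvT)
  · rw [mapClusterPt_iff_frequently]
    intro s hs
    obtain ⟨k, hk⟩ := hu.mem_nhds (continuous_subtype_val.continuousAt.preimage_mem_nhds
      (x := ⟨p, hp⟩) hs)
    rw [frequently_cofinite_iff_infinite]
    have hpair : Injective (Nat.pair k) := fun m n h => (Nat.pair_eq_pair.1 h).2
    refine (infinite_range_of_injective hpair).mono ?_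
    rintro _ ⟨m, rfl⟩
    simpa using hk

theorem exists_injective_forall_mem_open {U : ℕ → Set ℝ} (hU : ∀ n, IsOpen (U n))
    (hne : ∀ n, (U n).Nonempty) : ∃ X : ℕ → ℝ, Injective X ∧ ∀ n, X n ∈ U n := by
  have hdense (n : ℕ) : DenseRange fun q : ℚ => (q : ℝ) + n * √2 :=
    (Homeomorph.addRight _).surjective.denseRange.comp Rat.denseRange_cast (by fun_prop)
  choose q hq using fun n => (hdense n).exists_mem_open (hU n) (hne n)
  -- the cosets `ℚ + n √2` are pairwise disjoint
  refine ⟨fun n => q n + n * √2, fun m n h => ?_, hq⟩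
  by_contra hmn
  have : Irrational (((m - n : ℤ) : ℝ) * √2) :=
    irrational_sqrt_two.intCast_mul (sub_ne_zero.2 (by exact_mod_cast hmn))
  exact this.ne_rat (q n - q m) (by push_cast; linear_combination h)

theorem exists_injective_tendsto_dist {V : Set ℝ} (hV : IsOpen V) (a : ℕ → ℝ)
    (ha : ∀ n, a n ∈ closure V) :
    ∃ X : ℕ → ℝ, Injective X ∧ (∀ n, X n ∈ V) ∧
      Tendsto (fun n => dist (X n) (a n)) atTop (𝓝 0) := by
  have hne (n : ℕ) : (ball (a n) (1 / (n + 1)) ∩ V).Nonempty :=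
    mem_closure_iff_nhds.1 (ha n) _ (ball_mem_nhds _ Nat.one_div_pos_of_nat)
  obtain ⟨X, hXinj, hX⟩ := exists_injective_forall_mem_open (fun n => isOpen_ball.inter hV) hne
  exact ⟨X, hXinj, fun n => (hX n).2, squeeze_zero (fun n => dist_nonneg)
    (fun n => (mem_ball.1 (hX n).1).le) tendsto_one_div_add_atTop_nhds_zero_nat⟩

theorem Baire1.update {g : ℝ → ℝ} (hg : Baire1 g) (a c : ℝ) : Baire1 (update g a c) := by
  obtain ⟨G, hGc, hGg⟩ := hg
  refine ⟨fun n x => G n x + (c - G n a) * max 0 (1 - n * |x - a|),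
    fun n => (hGc n).add (continuousOn_const.mul (by fun_prop)), fun x hx => ?_⟩
  rcases eq_or_ne x a with rfl | hxa
  · simp
  · have hbump : ∀ᶠ n : ℕ in atTop, 1 ≤ n * |x - a| :=
      (tendsto_natCast_atTop_atTop.atTop_mul_const
        (abs_pos.2 (sub_ne_zero.2 hxa))).eventually_ge_atTop 1
    rw [update_of_ne hxa]
    refine (hGg x hx).congr' (hbump.mono fun n hn => ?_)
    simp [max_eq_left (sub_nonpos.2 hn)]

theorem baire2_of_eq_off_range {f g : ℝ → ℝ} (hg : Baire1 g) (X : ℕ → ℝ)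
    (hfg : ∀ x ∉ range X, f x = g x) : Baire2 f := by
  classical
  refine ⟨fun N => (X '' Iio N).piecewise f g, fun N => ?_, fun x _ => ?_⟩
  · show Baire1 ((X '' Iio N).piecewise f g)
    induction N with
    | zero =>
      convert hg using 1
      funext x
      simp [piecewise]
    | succ N ih =>
      rw [← Order.succ_eq_add_one, Order.Iio_succ_eq_insert, image_insert_eq, piecewise_insert]
      exact ih.update _ _
  · show Tendsto (fun N => (X '' Iio N).piecewise f g x) atTop (𝓝 (f x))
    by_cases hx : x ∈ range X
    · obtain ⟨n, rfl⟩ := hx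
      refine tendsto_const_nhds.congr' ((eventually_gt_atTop n).mono fun N hN => ?_)
      exact (piecewise_eq_of_mem _ _ _ (mem_image_of_mem X (mem_Iio.2 hN))).symm
    · refine tendsto_const_nhds.congr fun N => ?_
      rw [piecewise_eq_of_notMem _ _ _ fun h => hx (image_subset_range _ _ h), hfg x hx]

def lowerEnvelope (T : Set (ℝ × ℝ)) (x : ℝ) : ℝ :=
  sInf {y | (x, y) ∈ T}

/-- The Pasch–Hausdorff envelope: the largest `k`-Lipschitz minorant of `lowerEnvelope T`. -/
def lipschitzMinorant (T : Set (ℝ × ℝ)) (k : ℕ) (x : ℝ) : ℝ :=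
  sInf ((fun p : ℝ × ℝ => p.2 + k * |x - p.1|) '' T)

section Envelope

variable {T : Set (ℝ × ℝ)}

theorem bddBelow_fiber (hT : IsCompact T) (x : ℝ) : BddBelow {y | (x, y) ∈ T} :=
  (hT.image continuous_snd).bddBelow.mono fun y (hy : (x, y) ∈ T) => mem_image_of_mem Prod.snd hy

theorem lowerEnvelope_le (hT : IsCompact T) {x y : ℝ} (h : (x, y) ∈ T) :
    lowerEnvelope T x ≤ y :=
  csInf_le (bddBelow_fiber hT x) h

theorem lowerEnvelope_mem (hT : IsCompact T) {x : ℝ} (hx : ∃ y, (x, y) ∈ T) :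
    (x, lowerEnvelope T x) ∈ T :=
  (hT.isClosed.preimage (Continuous.prodMk_right x)).csInf_mem hx (bddBelow_fiber hT x)

theorem lipschitzMinorant_le (hT : IsCompact T) (k : ℕ) (x : ℝ) {p : ℝ × ℝ}
    (hp : p ∈ T) : lipschitzMinorant T k x ≤ p.2 + k * |x - p.1| :=
  csInf_le (hT.image (f := fun p : ℝ × ℝ => p.2 + k * |x - p.1|) (by fun_prop)).bddBelow
    (mem_image_of_mem _ hp)

theorem exists_lipschitzMinorant_eq (hT : IsCompact T) (hne : T.Nonempty) (k : ℕ) (x : ℝ) :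
    ∃ p ∈ T, lipschitzMinorant T k x = p.2 + k * |x - p.1| := by
  obtain ⟨p, hp, h⟩ :=
    (hT.image (f := fun p : ℝ × ℝ => p.2 + k * |x - p.1|) (by fun_prop)).sInf_mem (hne.image _)
  exact ⟨p, hp, h.symm⟩

theorem lipschitzWith_lipschitzMinorant (hT : IsCompact T) (hne : T.Nonempty) (k : ℕ) :
    LipschitzWith k (lipschitzMinorant T k) := by
  refine LipschitzWith.of_le_add_mul k fun x y => ?_
  obtain ⟨p, hp, hy⟩ := exists_lipschitzMinorant_eq hT hne k y
  calc lipschitzMinorant T k x ≤ p.2 + k * |x - p.1| := lipschitzMinorant_le hT k x hp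
    _ ≤ p.2 + k * (|x - y| + |y - p.1|) := by gcongr; exact abs_sub_le x y p.1
    _ = _ := by rw [hy, Real.dist_eq]; push_cast; ring

theorem monotone_lipschitzMinorant (hT : IsCompact T) (hne : T.Nonempty) (x : ℝ) :
    Monotone fun k => lipschitzMinorant T k x := by
  intro k l hkl
  obtain ⟨p, hp, hl⟩ := exists_lipschitzMinorant_eq hT hne l x
  calc lipschitzMinorant T k x ≤ p.2 + k * |x - p.1| := lipschitzMinorant_le hT k x hp
    _ ≤ p.2 + l * |x - p.1| := by gcongr
    _ = _ := hl.symm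

theorem lipschitzMinorant_le_lowerEnvelope (hT : IsCompact T) (k : ℕ) {x : ℝ}
    (hx : ∃ y, (x, y) ∈ T) : lipschitzMinorant T k x ≤ lowerEnvelope T x := by
  simpa using lipschitzMinorant_le hT k x (lowerEnvelope_mem hT hx)

theorem exists_lt_lipschitzMinorant (hT : IsCompact T) (hne : T.Nonempty) {x c : ℝ}
    (hc : c < lowerEnvelope T x) : ∃ k, c < lipschitzMinorant T k x := by
  by_contra! h
  set S : ℕ → Set (ℝ × ℝ) := fun k => {p ∈ T | p.2 + k * |x - p.1| ≤ c}
  have hS_anti (k : ℕ) : S (k + 1) ⊆ S k := fun p ⟨hp, hpc⟩ =>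
    ⟨hp, le_trans (by gcongr; simp) hpc⟩
  have hS_ne (k : ℕ) : (S k).Nonempty := by
    obtain ⟨p, hp, hk⟩ := exists_lipschitzMinorant_eq hT hne k x
    exact ⟨p, hp, hk ▸ h k⟩
  have hS_closed (k : ℕ) : IsClosed (S k) :=
    hT.isClosed.inter
      (isClosed_le (f := fun p : ℝ × ℝ => p.2 + k * |x - p.1|) (by fun_prop) continuous_const)
  obtain ⟨q, hq⟩ := IsCompact.nonempty_iInter_of_sequence_nonempty_isCompact_isClosed S hS_anti
    hS_ne (hT.of_isClosed_subset (hS_closed 0) inter_subset_left) hS_closed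
  simp only [mem_iInter] at hq
  have hqx : q.1 = x := by
    by_contra hqx
    have hpos : 0 < |x - q.1| := abs_pos.2 (sub_ne_zero.2 (Ne.symm hqx))
    obtain ⟨k, hk⟩ := exists_nat_gt ((c - q.2) / |x - q.1|)
    rw [div_lt_iff₀ hpos] at hk
    linarith [(hq k).2]
  have hq0 : q.2 ≤ c := by simpa using (hq 0).2
  linarith [lowerEnvelope_le hT (hqx ▸ (hq 0).1 : (x, q.2) ∈ T)]

theorem tendsto_lipschitzMinorant (hT : IsCompact T) (hne : T.Nonempty) {x : ℝ}
    (hx : ∃ y, (x, y) ∈ T) :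
    Tendsto (fun k => lipschitzMinorant T k x) atTop (𝓝 (lowerEnvelope T x)) := by
  refine tendsto_order.2 ⟨fun c hc => ?_, fun c hc => Eventually.of_forall fun k =>
    (lipschitzMinorant_le_lowerEnvelope hT k hx).trans_lt hc⟩
  obtain ⟨k, hk⟩ := exists_lt_lipschitzMinorant hT hne hc
  exact eventually_atTop.2 ⟨k, fun l hl => hk.trans_le (monotone_lipschitzMinorant hT hne x hl)⟩

theorem baire1_lowerEnvelope (hT : IsCompact T)
    (hfull : ∀ x ∈ Icc (0:ℝ) 1, ∃ y, (x, y) ∈ T) :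
    Baire1 (lowerEnvelope T) := by
  obtain ⟨y, hy⟩ := hfull 0 (by norm_num)
  exact ⟨lipschitzMinorant T,
    fun k => (lipschitzWith_lipschitzMinorant hT ⟨_, hy⟩ k).continuous.continuousOn,
    fun x hx => tendsto_lipschitzMinorant hT ⟨_, hy⟩ (hfull x hx)⟩

end Envelope

theorem isCompact_accPts_graphOn {A : Set ℝ} {f : ℝ → ℝ} {M : ℝ} (hA : IsCompact A)
    (hM : ∀ x ∈ A, |f x| ≤ M) : IsCompact (accPts (graphOn A f)) := by
  have hK : graphOn A f ⊆ A ×ˢ Icc (-M) M := fun p ⟨hp, hpf⟩ =>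
    ⟨hp, by rw [hpf]; exact abs_le.1 (hM _ hp)⟩
  exact (hA.prod isCompact_Icc).of_isClosed_subset (isClosed_derivedSet _)
    ((derivedSet_subset_closure _).trans (closure_minimal hK (hA.prod isCompact_Icc).isClosed))

theorem exists_mem_accPts_graphOn {A : Set ℝ} {f : ℝ → ℝ} {M : ℝ} (hA : IsCompact A)
    (hM : ∀ x ∈ A, |f x| ≤ M) {x : ℝ} (hx : AccPt x (𝓟 A)) :
    ∃ y, (x, y) ∈ accPts (graphOn A f) := by
  set F := 𝓝[≠] x ⊓ 𝓟 A
  have : F.NeBot := hx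
  have hF : ∀ᶠ y in F, y ≠ x ∧ y ∈ A :=
    inter_mem_inf self_mem_nhdsWithin (mem_principal_self A)
  have hφ : Tendsto (fun y => (y, f y)) F (𝓟 (A ×ˢ Icc (-M) M)) :=
    tendsto_principal.2 (hF.mono fun y hy => ⟨hy.2, abs_le.1 (hM y hy.2)⟩)
  obtain ⟨a, -, ha⟩ := (hA.prod isCompact_Icc) hφ
  have ha1 : a.1 = x := t2_iff_nhds.1 inferInstance
    (ha.map continuous_fst.continuousAt
      (tendsto_map'_iff.2 (tendsto_id'.2 (inf_le_left.trans nhdsWithin_le_nhds)))).neBot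
  refine ⟨a.2, ?_⟩
  rw [← ha1, accPts_eq_derivedSet, mem_derivedSet, accPt_principal_iff_clusterPt]
  refine ha.mono (tendsto_principal.2 (hF.mono fun y hy => ⟨⟨hy.2, rfl⟩, fun h => hy.1 ?_⟩))
  rw [← ha1, ← congrArg Prod.fst (mem_singleton_iff.1 h)]

theorem accPts_range_eq {T : Set (ℝ × ℝ)} {v w : ℕ → ℝ × ℝ} (hw : Injective w)
    (hv : ∀ p, MapClusterPt p cofinite v ↔ p ∈ T)
    (hvw : Tendsto (fun n => dist (w n) (v n)) cofinite (𝓝 0)) : accPts (range w) = T := by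
  ext p
  rw [accPts_eq_derivedSet, mem_derivedSet, hw.accPt_range_iff, ← hv p]
  exact ⟨fun h => h.of_tendsto_dist_s7 (by simpa only [dist_comm] using hvw),
    fun h => h.of_tendsto_dist_s7 hvw⟩

theorem accPts_eq_of_subset_of_subset_union {S G T : Set (ℝ × ℝ)} (hT : IsClosed T)
    (hS : accPts S = T) (hSG : S ⊆ G) (hGT : G ⊆ T ∪ S) : accPts G = T := by
  rw [accPts_eq_derivedSet] at hS ⊢
  refine le_antisymm ?_ (hS ▸ derivedSet_mono _ _ hSG)
  calc derivedSet G ⊆ derivedSet (T ∪ S) := derivedSet_mono _ _ hGT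
    _ = derivedSet T ∪ derivedSet S := derivedSet_union _ _
    _ ⊆ T := union_subset ((isClosed_iff_derivedSet_subset T).1 hT) hS.le

theorem exists_baire2_accPts_graphOn_eq {T : Set (ℝ × ℝ)}
    (hT : ∀ p ∈ T, p.1 ∈ Icc (0:ℝ) 1) (hTc : IsCompact T)
    (hfull : ∀ x ∈ Icc (0:ℝ) 1, ∃ y, (x, y) ∈ T) :
    ∃ f : ℝ → ℝ, Baire2 f ∧ (∃ M, ∀ x ∈ Icc (0:ℝ) 1, |f x| ≤ M) ∧
      accPts (graphOn (Icc 0 1) f) = T := by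
  obtain ⟨y₀, hy₀⟩ := hfull 0 (by norm_num)
  obtain ⟨v, hvT, hv⟩ := exists_seq_mapClusterPt_iff hTc.isClosed ⟨_, hy₀⟩
  obtain ⟨X, hXinj, hX, hXv⟩ := exists_injective_tendsto_dist isOpen_Ioo (fun n => (v n).1)
    fun n => by rw [closure_Ioo zero_ne_one]; exact hT _ (hvT n)
  set f := extend X (fun n => (v n).2) (lowerEnvelope T)
  have hfX (n : ℕ) : f (X n) = (v n).2 := hXinj.extend_apply _ _ n
  have hf_off (x : ℝ) (hx : x ∉ range X) : f x = lowerEnvelope T x := extend_apply' _ _ _ hx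
  set w : ℕ → ℝ × ℝ := fun n => (X n, (v n).2)
  have hw : accPts (range w) = T := by
    refine accPts_range_eq (Injective.of_comp (f := Prod.fst) hXinj) hv ?_
    rw [Nat.cofinite_eq_atTop]
    simpa [w, Prod.dist_eq] using hXv
  obtain ⟨M, hM⟩ := isBounded_iff_forall_norm_le.1 (hTc.image continuous_snd).isBounded
  refine ⟨f, baire2_of_eq_off_range (baire1_lowerEnvelope hTc hfull) X hf_off,
    ⟨M, fun x hx => ?_⟩,
    accPts_eq_of_subset_of_subset_union hTc.isClosed hw ?_ ?_⟩
  · by_cases h : x ∈ range X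
    · obtain ⟨n, rfl⟩ := h
      simpa only [hfX, Real.norm_eq_abs] using hM _ ⟨_, hvT n, rfl⟩
    · simpa only [hf_off x h, Real.norm_eq_abs] using
        hM _ ⟨_, lowerEnvelope_mem hTc (hfull x hx), rfl⟩
  · rintro _ ⟨n, rfl⟩
    exact ⟨Ioo_subset_Icc_self (hX n), (hfX n).symm⟩
  · rintro ⟨x, y⟩ ⟨hx, hy : y = f x⟩
    subst hy
    by_cases h : x ∈ range X
    · obtain ⟨n, rfl⟩ := h
      exact Or.inr ⟨n, by simp [w, hfX]⟩
    · exact Or.inl (hf_off x h ▸ lowerEnvelope_mem hTc (hfull x hx))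

theorem stmt7 (T : Set (ℝ × ℝ)) (hT : ∀ p ∈ T, p.1 ∈ Icc (0:ℝ) 1) :
    (∃ f : ℝ → ℝ, Baire2 f ∧ (∃ M, ∀ x ∈ Icc (0:ℝ) 1, |f x| ≤ M) ∧
        accPts (graphOn (Icc 0 1) f) = T) ↔
      (IsCompact T ∧ ∀ x ∈ Icc (0:ℝ) 1, ∃ y, (x, y) ∈ T) := by
  constructor
  · rintro ⟨f, -, ⟨M, hM⟩, rfl⟩
    have hperfect : Preperfect (Icc (0:ℝ) 1) := isPreconnected_Icc.preperfect_of_nontrivial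
      ⟨0, left_mem_Icc.2 zero_le_one, 1, right_mem_Icc.2 zero_le_one, zero_ne_one⟩
    exact ⟨isCompact_accPts_graphOn isCompact_Icc hM,
      fun x hx => exists_mem_accPts_graphOn isCompact_Icc hM (hperfect x hx)⟩
  · rintro ⟨hTc, hfull⟩
    exact exists_baire2_accPts_graphOn_eq hT hTc hfull
end
end
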